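/- arXiv:2309.04908 — 6 statements merged into one kernel-verified Lean document; each statement's English description precedes it below -/
import Mathlib

section
/- For an integer base b ≥ 2 and a prime s, with q_k = ∑_{j=0}^{s-1} b^{j·s^{k-1}}, for every k ≥ 2 the greatest common divisor of q_k and the product q_1·q_2·...·q_{k-1} divides s. -/
/-!
With `x = b ^ s ^ (k - 1)`, the product `q_1 ⋯ q_{k-1}` telescopes to `(x - 1) / (b - 1)`, since
`q_j (y - 1) = y ^ s - 1` for `y = b ^ s ^ (j - 1)`. So the gcd divides `gcd (q_k, x - 1)`, and
`q_k = 1 + x + ⋯ + x ^ (s - 1) ≡ s [MOD x - 1]`.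
-/

open Finset

lemma prod_geom_sum_pow_mul_sub_one {x : ℕ} (hx : 1 ≤ x) (s n : ℕ) :
    (∏ j ∈ range n, ∑ i ∈ range s, (x ^ s ^ j) ^ i) * (x - 1) = x ^ s ^ n - 1 := by
  induction n with
  | zero => simp
  | succ n ih =>
    rw [prod_range_succ, mul_right_comm, ih, mul_comm,
      geom_sum_mul_of_one_le (Nat.one_le_pow _ _ hx), ← pow_mul, ← pow_succ]

lemma gcd_geom_sum_sub_one_dvd {x : ℕ} (hx : 1 ≤ x) (s : ℕ) :
    Nat.gcd (∑ i ∈ range s, x ^ i) (x - 1) ∣ s := by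
  have hx1 : x ≡ 1 [MOD x - 1] := ((Nat.modEq_iff_dvd' hx).2 dvd_rfl).symm
  have hsum : ∑ i ∈ range s, x ^ i ≡ ∑ i ∈ range s, 1 ^ i [MOD x - 1] :=
    Nat.ModEq.sum fun i _ => hx1.pow i
  simp only [one_pow, sum_const, card_range, smul_eq_mul, mul_one] at hsum
  exact hsum.gcd_eq ▸ Nat.gcd_dvd_left s (x - 1)

theorem stmt_2_general (b s : ℕ) (hb : 2 ≤ b) (k : ℕ) :
    Nat.gcd (∑ j ∈ Finset.range s, b ^ (j * s ^ (k - 1)))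
      (∏ j ∈ Finset.Icc 1 (k - 1), (∑ i ∈ Finset.range s, b ^ (i * s ^ (j - 1)))) ∣ s := by
  have hb1 : 1 ≤ b := by omega
  have hpow : ∀ j i, b ^ (i * s ^ j) = (b ^ s ^ j) ^ i := fun j i => by rw [← pow_mul, mul_comm]
  have hprod : ∏ j ∈ Icc 1 (k - 1), ∑ i ∈ range s, b ^ (i * s ^ (j - 1)) =
      ∏ j ∈ range (k - 1), ∑ i ∈ range s, (b ^ s ^ j) ^ i := by
    rw [← Ico_add_one_right_eq_Icc, prod_Ico_eq_prod_range]
    simp [hpow, add_comm 1]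
  have hdvd : (∏ j ∈ range (k - 1), ∑ i ∈ range s, (b ^ s ^ j) ^ i) ∣ b ^ s ^ (k - 1) - 1 :=
    Dvd.intro _ (prod_geom_sum_pow_mul_sub_one hb1 s (k - 1))
  rw [hprod]
  simp only [hpow]
  exact (Nat.gcd_dvd_gcd_of_dvd_right _ hdvd).trans
    (gcd_geom_sum_sub_one_dvd (Nat.one_le_pow _ _ hb1) s)

theorem stmt_2 (b s : ℕ) (hb : 2 ≤ b) (hs : s.Prime) (k : ℕ) (hk : 2 ≤ k) :
    Nat.gcd (∑ j ∈ Finset.range s, b ^ (j * s ^ (k - 1)))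
      (∏ j ∈ Finset.Icc 1 (k - 1), (∑ i ∈ Finset.range s, b ^ (i * s ^ (j - 1)))) ∣ s :=
  stmt_2_general b s hb k
end

section
/- Let b ≥ 2 be an integer. There is no finite set S of primes and no infinite strictly increasing sequence (n_i) of positive integers such that every repunit u_{n_i} = (b^{n_i} - 1)/(b-1) has all its prime factors in S. Equivalently, the set of primes dividing some repunit (b^n - 1)/(b-1), n ranging over any infinite set of positive integers, is infinite. -/
/-!
If every prime factor of the repunit `u_n = (b^n - 1)/(b - 1)` lies in a finite set `S`, then
`u_n = ∏_{p ∈ S} p^{v_p(u_n)}`. Such a `p` does not divide `b`, and lifting the exponent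
(applied to `b^{2n} - 1` for `p = 2` and to `(b^{p-1})^n - 1` for odd `p`, both multiples of
`b^n - 1`) gives `p^{v_p(b^n - 1)} ≤ b^p n`. Hence `u_n ≤ C n^{|S|}` for a constant `C`,
whereas `u_n ≥ 2^n - 1`, so only finitely many `n` qualify.
-/

open Finset Filter

namespace Nat

theorem eventually_mul_pow_lt_pow (C k : ℕ) {r : ℕ} (hr : 1 < r) :
    ∀ᶠ n in atTop, C * n ^ k < r ^ n := by
  have h : (fun n : ℕ ↦ ((C + 1 : ℕ) : ℝ) * (n : ℝ) ^ k) =o[atTop] fun n ↦ (r : ℝ) ^ n :=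
    (isLittleO_pow_const_const_pow_of_one_lt k (by exact_mod_cast hr)).const_mul_left _
  filter_upwards [h.eventuallyLE, eventually_ne_atTop 0] with n hle hn
  have hle' : (C + 1) * n ^ k ≤ r ^ n := by
    rw [Real.norm_of_nonneg (by positivity), Real.norm_of_nonneg (by positivity)] at hle
    exact_mod_cast hle
  have hpos : 0 < n ^ k := Nat.pow_pos (Nat.pos_of_ne_zero hn)
  nlinarith

theorem le_prod_of_primeFactors_subset {m : ℕ} {S : Finset ℕ} {f : ℕ → ℕ} (hm : m ≠ 0)
    (hS : m.primeFactors ⊆ S) (hf : ∀ p ∈ S, ordProj[p] m ≤ f p) : m ≤ ∏ p ∈ S, f p :=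
  calc m = ∏ p ∈ m.primeFactors, ordProj[p] m := prod_primeFactors_pow_factorization hm
    _ = ∏ p ∈ S, ordProj[p] m := prod_subset hS fun p _ hp ↦ by
          rw [Finsupp.notMem_support_iff.mp hp, pow_zero]
    _ ≤ ∏ p ∈ S, f p := prod_le_prod' hf

theorem ordProj_le_ordProj_of_dvd {a b : ℕ} (p : ℕ) (hb : b ≠ 0) (hab : a ∣ b) :
    ordProj[p] a ≤ ordProj[p] b :=
  le_of_dvd (ordProj_pos b p) (ordProj_dvd_ordProj_of_dvd hb hab p)

theorem ordProj_pow_sub_one_le_of_two {a n : ℕ} (ha : 1 < a) (h2a : ¬2 ∣ a) (hn : n ≠ 0) :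
    ordProj[2] (a ^ n - 1) ≤ a ^ 2 * n := by
  have h2n : 2 * n ≠ 0 := by omega
  have hlte := padicValNat.pow_two_sub_one ha h2a h2n (even_two_mul n)
  simp only [← factorization_def _ prime_two] at hlte
  have hdouble : 2 * ordProj[2] (a ^ (2 * n) - 1) ≤ (a + 1) * (a - 1) * (2 * n) := by
    rw [← _root_.pow_succ', hlte, pow_add, pow_add]
    gcongr <;> exact ordProj_le 2 (by omega)
  calc ordProj[2] (a ^ n - 1) ≤ ordProj[2] (a ^ (2 * n) - 1) :=
        ordProj_le_ordProj_of_dvd 2 (sub_ne_zero_of_lt (one_lt_pow h2n ha))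
          (pow_sub_one_dvd_pow_sub_one a (dvd_mul_left n 2))
    _ ≤ (a + 1) * (a - 1) * n := by nlinarith
    _ ≤ a ^ 2 * n := by gcongr; rw [← Nat.sq_sub_sq, one_pow]; exact sub_le _ _

theorem ordProj_pow_sub_one_le_of_odd {p a n : ℕ} (hp : p.Prime) (hodd : Odd p) (ha : 1 < a)
    (hpa : ¬p ∣ a) (hn : n ≠ 0) : ordProj[p] (a ^ n - 1) ≤ a ^ p * n := by
  have : Fact p.Prime := ⟨hp⟩
  have hfermat : p ∣ a ^ (p - 1) - 1 := by
    have := ModEq.pow_totient ((hp.coprime_iff_not_dvd.mpr hpa).symm)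
    rw [totient_prime hp] at this
    exact (modEq_iff_dvd' (one_le_pow _ _ (by omega))).mp this.symm
  have hap : 1 < a ^ (p - 1) := one_lt_pow (by have := hp.two_le; omega) ha
  have hlte := padicValNat.pow_sub_pow hodd hap hfermat (fun h ↦ hpa (hp.dvd_of_dvd_pow h)) hn
  simp only [one_pow, ← pow_mul, ← factorization_def _ hp] at hlte
  calc ordProj[p] (a ^ n - 1) ≤ ordProj[p] (a ^ ((p - 1) * n) - 1) :=
        ordProj_le_ordProj_of_dvd p (by rw [pow_mul]; exact sub_ne_zero_of_lt (one_lt_pow hn hap))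
          (pow_sub_one_dvd_pow_sub_one a (dvd_mul_left n _))
    _ = ordProj[p] (a ^ (p - 1) - 1) * ordProj[p] n := by rw [hlte, pow_add]
    _ ≤ (a ^ (p - 1) - 1) * n := by gcongr <;> exact ordProj_le p (by omega)
    _ ≤ a ^ p * n := by
        gcongr; exact (sub_le _ _).trans (Nat.pow_le_pow_right (by omega) (sub_le _ _))

theorem ordProj_pow_sub_one_le {p a n : ℕ} (hp : p.Prime) (ha : 1 < a) (hpa : ¬p ∣ a)
    (hn : n ≠ 0) : ordProj[p] (a ^ n - 1) ≤ a ^ p * n := by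
  rcases hp.eq_two_or_odd' with rfl | hodd
  · exact ordProj_pow_sub_one_le_of_two ha hpa hn
  · exact ordProj_pow_sub_one_le_of_odd hp hodd ha hpa hn

theorem coprime_geomSum {b n : ℕ} (hn : n ≠ 0) : Coprime b (∑ i ∈ range n, b ^ i) := by
  obtain ⟨m, rfl⟩ := exists_eq_succ_of_ne_zero hn
  rw [sum_range_succ', pow_zero]
  simp [pow_succ, ← sum_mul]

theorem two_pow_le_geomSum_add_one {b : ℕ} (hb : 2 ≤ b) (n : ℕ) :
    2 ^ n ≤ ∑ i ∈ range n, b ^ i + 1 :=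
  calc 2 ^ n = ∑ i ∈ range n, 2 ^ i + 1 := by
        rw [geomSum_eq le_rfl, Nat.div_one, Nat.sub_add_cancel Nat.one_le_two_pow]
    _ ≤ ∑ i ∈ range n, b ^ i + 1 := by gcongr

theorem ordProj_geomSum_le {b n : ℕ} (hb : 1 < b) (hn : n ≠ 0) (p : ℕ) :
    ordProj[p] (∑ i ∈ range n, b ^ i) ≤ b ^ p * n := by
  by_cases hp : p.Prime ∧ p ∣ ∑ i ∈ range n, b ^ i
  · obtain ⟨hp, hpu⟩ := hp
    have hpb : ¬p ∣ b := fun hpb ↦ hp.ne_one (eq_one_of_dvd_coprimes (coprime_geomSum hn) hpb hpu)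
    calc ordProj[p] (∑ i ∈ range n, b ^ i) ≤ ordProj[p] (b ^ n - 1) :=
          ordProj_le_ordProj_of_dvd p (sub_ne_zero_of_lt (one_lt_pow hn hb))
            (Dvd.intro _ (geom_sum_mul_of_one_le hb.le n))
      _ ≤ b ^ p * n := ordProj_pow_sub_one_le hp hb hpb hn
  · rw [(factorization_eq_zero_iff _ _).mpr (by tauto), pow_zero]
    exact one_le_iff_ne_zero.mpr (by positivity)

theorem geomSum_le_of_primeFactors_subset {b n : ℕ} {S : Finset ℕ} (hb : 1 < b) (hn : n ≠ 0)
    (hS : (∑ i ∈ range n, b ^ i).primeFactors ⊆ S) :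
    ∑ i ∈ range n, b ^ i ≤ (∏ p ∈ S, b ^ p) * n ^ S.card := by
  rw [← prod_const, ← prod_mul_distrib]
  exact le_prod_of_primeFactors_subset (by positivity) hS fun p _ ↦ ordProj_geomSum_le hb hn p

end Nat

theorem stmt_5 (b : ℕ) (hb : 2 ≤ b) :
    ¬ ∃ (S : Finset ℕ) (n : ℕ → ℕ), (∀ p ∈ S, p.Prime) ∧ StrictMono n ∧ (∀ i, 0 < n i) ∧
      ∀ i p, p.Prime → p ∣ (∑ j ∈ Finset.range (n i), b ^ j) → p ∈ S := by
  rintro ⟨S, n, -, hmono, hpos, hS⟩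
  set C := ∏ p ∈ S, b ^ p
  obtain ⟨i, hgrowth⟩ := (hmono.tendsto_atTop.eventually
    (Nat.eventually_mul_pow_lt_pow (C + 1) S.card one_lt_two)).exists
  have hupper : _ ≤ C * _ := Nat.geomSum_le_of_primeFactors_subset hb (hpos i).ne'
    fun p hp ↦ hS i p (Nat.prime_of_mem_primeFactors hp) (Nat.dvd_of_mem_primeFactors hp)
  have hlower := Nat.two_pow_le_geomSum_add_one hb (n i)
  have hone := Nat.one_le_pow S.card (n i) (hpos i)
  nlinarith
end

section
/- Let S = {s_1, ..., s_l} be a finite set of primes and b ≥ 2 an integer base. The set Ξ^{FF}_{S,b} of real numbers in (0,1) whose b-ary expansion a_1a_2a_3... admits a strictly increasing sequence (n_i) with all numerators u_{n_i} = ∑_{j=1}^{n_i} a_j b^{n_i − j} lying in the multiplicative semigroup M_S generated by S, has Hausdorff dimension zero. -/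
/-!
Every `S`-factored integer `u ≤ N` is `∏_{p ∈ S} p ^ e_p` with all `e_p ≤ log₂ N`, so there are
at most `(log₂ N + 1) ^ |S|` of them. Hence the `b`-adic intervals `[u / bⁿ, (u + 1) / bⁿ]` with
`S`-factored numerator are polynomially many in `n`, and for every `d > 0` the sum of their
`d`-th powers of diameters, `∑ₙ poly(n) · b^(-n d)`, converges. A point whose truncated
numerators are infinitely often `S`-factored lies in infinitely many of these intervals, and the
Hausdorff–Cantelli lemma gives `μH[d] = 0` for every `d > 0`.
-/

open Set Filter MeasureTheory Asymptotics
open scoped ENNReal Topology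

namespace Nat

theorem factorization_le_log_two {u N : ℕ} (hu : u ≠ 0) (huN : u ≤ N) (p : ℕ) :
    u.factorization p ≤ Nat.log 2 N := by
  rcases eq_or_ne (u.factorization p) 0 with h | h
  · simp [h]
  have hp : p.Prime := prime_of_mem_primeFactors (Finsupp.mem_support_iff.2 h)
  refine le_log_of_pow_le one_lt_two ?_
  calc 2 ^ u.factorization p ≤ p ^ u.factorization p := Nat.pow_le_pow_left hp.two_le _
    _ ≤ u := ordProj_le p hu
    _ ≤ N := huN

theorem encard_factoredNumbers_inter_Iic_le (s : Finset ℕ) (N : ℕ) :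
    (factoredNumbers s ∩ Iic N).encard ≤ ((Nat.log 2 N + 1) ^ s.card : ℕ) := by
  let monomial : (s → Fin (Nat.log 2 N + 1)) → ℕ := fun e => ∏ p : s, (p : ℕ) ^ (e p : ℕ)
  have hsub : factoredNumbers s ∩ Iic N ⊆ monomial '' univ := by
    rintro u ⟨hu, huN : u ≤ N⟩
    rw [mem_factoredNumbers_iff_primeFactors_subset] at hu
    refine ⟨fun p => ⟨u.factorization p, lt_succ_of_le (factorization_le_log_two hu.1 huN p)⟩,
      mem_univ _, ?_⟩
    refine (Finset.prod_coe_sort s (fun p => p ^ u.factorization p)).trans ?_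
    rw [← Finset.prod_subset hu.2 fun p _ hp => by rw [Finsupp.notMem_support_iff.1 hp, pow_zero]]
    exact (prod_primeFactors_pow_factorization hu.1).symm
  calc (factoredNumbers s ∩ Iic N).encard ≤ (monomial '' univ).encard := encard_le_encard hsub
    _ ≤ (univ : Set (s → Fin (Nat.log 2 N + 1))).encard := encard_image_le _ _
    _ = _ := by simp [ENat.card_eq_coe_fintype_card]

theorem log_two_pow_lt (b : ℕ) {n : ℕ} (hn : n ≠ 0) :
    Nat.log 2 (b ^ n) < (Nat.log 2 b + 1) * n := by
  refine log_lt_of_lt_pow' (by positivity) ?_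
  rw [pow_mul]
  exact Nat.pow_lt_pow_left (lt_pow_succ_log_self one_lt_two b) hn

end Nat

theorem summable_log_two_pow_add_one_pow_mul_geometric (b k : ℕ) {r : ℝ} (hr0 : 0 ≤ r)
    (hr : r < 1) :
    Summable fun n : ℕ => (((Nat.log 2 (b ^ n) + 1) ^ k : ℕ) : ℝ) * r ^ n := by
  have hpoly : (fun n : ℕ => (((Nat.log 2 (b ^ n) + 1) ^ k : ℕ) : ℝ)) =O[atTop]
      fun n => ((n ^ k : ℕ) : ℝ) := by
    refine IsBigO.of_bound ((Nat.log 2 b + 1) ^ k : ℕ) ?_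
    filter_upwards [eventually_ne_atTop 0] with n hn
    rw [Real.norm_natCast, Real.norm_natCast, ← Nat.cast_mul, Nat.cast_le, ← mul_pow]
    exact Nat.pow_le_pow_left (Nat.log_two_pow_lt b hn) k
  exact (summable_norm_mul_geometric_of_norm_lt_one (R := ℝ)
    (u := fun n => (Nat.log 2 (b ^ n) + 1) ^ k) (by rwa [Real.norm_of_nonneg hr0]) hpoly).of_norm

section HausdorffCantelli

variable {X : Type*} [EMetricSpace X] [MeasurableSpace X] [BorelSpace X]

/-- The Hausdorff–Cantelli lemma. -/
theorem MeasureTheory.hausdorffMeasure_limsup_eq_zero {ι : ℕ → Type*} [∀ n, Countable (ι n)]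
    {d : ℝ} (hd : 0 < d) (E : ∀ n, ι n → Set X)
    (hE : ∑' n, ∑' i, Metric.ediam (E n i) ^ d ≠ ∞) :
    μH[d] (limsup (fun n => ⋃ i, E n i) atTop) = 0 := by
  set tail : ℕ → ℝ≥0∞ := fun k => ∑' m, ∑' i, Metric.ediam (E (m + k) i) ^ d
  have htail : Tendsto tail atTop (𝓝 0) := ENNReal.tendsto_sum_nat_add _ hE
  let t : ∀ k, (Σ m, ι (m + k)) → Set X := fun k j => E (j.1 + k) j.2
  have hsum (k : ℕ) : ∑' j, Metric.ediam (t k j) ^ d = tail k := ENNReal.tsum_sigma' _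
  -- a single set of the `k`-th tail cover has `ediam ^ d` at most the whole tail sum
  have hdiam (k : ℕ) (j : Σ m, ι (m + k)) : Metric.ediam (t k j) ≤ tail k ^ d⁻¹ := by
    rw [← ENNReal.rpow_rpow_inv hd.ne' (Metric.ediam (t k j))]
    gcongr
    exact hsum k ▸ ENNReal.le_tsum j
  have hr : Tendsto (fun k => tail k ^ d⁻¹) atTop (𝓝 0) := by
    have := ((ENNReal.continuous_rpow_const (y := d⁻¹)).tendsto 0).comp htail
    rwa [ENNReal.zero_rpow_of_pos (inv_pos.2 hd)] at this
  have hcover (k : ℕ) : limsup (fun n => ⋃ i, E n i) atTop ⊆ ⋃ j, t k j := by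
    intro x hx
    obtain ⟨n, hkn, hxn⟩ := frequently_atTop.1 (mem_limsup_iff_frequently_mem.1 hx) k
    obtain ⟨m, rfl⟩ : ∃ m, n = m + k := ⟨n - k, by omega⟩
    obtain ⟨i, hi⟩ := mem_iUnion.1 hxn
    exact mem_iUnion.2 ⟨⟨m, i⟩, hi⟩
  refine le_antisymm ?_ zero_le
  calc μH[d] (limsup (fun n => ⋃ i, E n i) atTop)
      ≤ liminf (fun k => ∑' j, Metric.ediam (t k j) ^ d) atTop :=
        Measure.hausdorffMeasure_le_liminf_tsum d _ _ hr t (.of_forall hdiam) (.of_forall hcover)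
    _ = 0 := by simp_rw [hsum]; exact htail.liminf_eq

theorem dimH_eq_zero_of_forall_hausdorffMeasure_eq_zero {s : Set X}
    (h : ∀ d : ℝ, 0 < d → μH[d] s = 0) : dimH s = 0 := by
  refine nonpos_iff_eq_zero.1 (dimH_le fun d hd => ?_)
  by_contra! hpos
  exact ENNReal.zero_ne_top (h d (by exact_mod_cast hpos) ▸ hd)

end HausdorffCantelli

def bAdicInterval (b n u : ℕ) : Set ℝ := Icc (u / b ^ n) ((u + 1) / b ^ n)

theorem ediam_bAdicInterval_rpow (b n u : ℕ) {d : ℝ} (hd : 0 < d) :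
    Metric.ediam (bAdicInterval b n u) ^ d = ENNReal.ofReal ((((b : ℝ) ^ d)⁻¹) ^ n) := by
  rw [bAdicInterval, Real.ediam_Icc, add_div, add_sub_cancel_left,
    ENNReal.ofReal_rpow_of_nonneg (by positivity) hd.le, one_div, Real.inv_rpow (by positivity),
    ← Real.rpow_pow_comm (by positivity), inv_pow]

theorem tsum_ediam_bAdicInterval_factoredNumbers_rpow_ne_top (S : Finset ℕ) {b : ℕ} (hb : 2 ≤ b)
    {d : ℝ} (hd : 0 < d) :
    ∑' n, ∑' u : ↥(Nat.factoredNumbers S ∩ Iic (b ^ n)), Metric.ediam (bAdicInterval b n u) ^ d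
      ≠ ∞ := by
  set r : ℝ := ((b : ℝ) ^ d)⁻¹
  have hr1 : r < 1 := inv_lt_one_of_one_lt₀ (Real.one_lt_rpow (by exact_mod_cast hb) hd)
  have hsummable := summable_log_two_pow_add_one_pow_mul_geometric b S.card (by positivity) hr1
  refine ne_top_of_le_ne_top (ENNReal.ofReal_ne_top (r := ∑' n : ℕ,
    (((Nat.log 2 (b ^ n) + 1) ^ S.card : ℕ) : ℝ) * r ^ n)) ?_
  rw [ENNReal.ofReal_tsum_of_nonneg (fun n => by positivity) hsummable]
  refine ENNReal.tsum_le_tsum fun n => ?_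
  simp_rw [ediam_bAdicInterval_rpow b n _ hd, ENNReal.tsum_set_const,
    ENNReal.ofReal_mul (Nat.cast_nonneg _), ENNReal.ofReal_natCast]
  gcongr
  exact_mod_cast Nat.encard_factoredNumbers_inter_Iic_le S (b ^ n)

namespace Real

theorem ofDigits_mem_bAdicInterval {b : ℕ} (d : ℕ → Fin b) (n : ℕ) :
    ofDigits d ∈ bAdicInterval b n (∑ i ∈ Finset.range n, (d i : ℕ) * b ^ (n - 1 - i)) := by
  have hb : (0 : ℝ) < b := Nat.cast_pos.2 (d 0).pos
  have hhead : ∑ i ∈ Finset.range n, ofDigitsTerm d i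
      = ((∑ i ∈ Finset.range n, (d i : ℕ) * b ^ (n - 1 - i) : ℕ) : ℝ) / b ^ n := by
    push_cast
    rw [Finset.sum_div]
    refine Finset.sum_congr rfl fun i hi => ?_
    rw [ofDigitsTerm, ← div_eq_mul_inv, div_eq_div_iff (by positivity) (by positivity), mul_assoc,
      ← pow_add]
    have := Finset.mem_range.1 hi
    congr 2
    omega
  rw [bAdicInterval, ofDigits_eq_sum_add_ofDigits d n, hhead, add_div, one_div]
  have htail0 := ofDigits_nonneg fun i => d (i + n)
  have htail1 := ofDigits_le_one fun i => d (i + n)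
  have hinv := inv_pos.2 (pow_pos hb n)
  constructor <;> nlinarith

theorem ofDigits_mem_limsup_bAdicInterval {b : ℕ} (S : Finset ℕ) (d : ℕ → Fin b)
    (h : ∃ᶠ n in atTop,
      ∑ i ∈ Finset.range n, (d i : ℕ) * b ^ (n - 1 - i) ∈ Nat.factoredNumbers S) :
    ofDigits d ∈ limsup (fun n =>
      ⋃ u : ↥(Nat.factoredNumbers S ∩ Iic (b ^ n)), bAdicInterval b n u) atTop := by
  refine mem_limsup_iff_frequently_mem.2 (h.mono fun n hn => mem_iUnion.2 ?_)
  have hmem := ofDigits_mem_bAdicInterval d n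
  have hle : ∑ i ∈ Finset.range n, (d i : ℕ) * b ^ (n - 1 - i) ≤ b ^ n := by
    have := hmem.1.trans (ofDigits_le_one d)
    rw [div_le_one (pow_pos (Nat.cast_pos.2 (d 0).pos) n)] at this
    exact_mod_cast this
  exact ⟨⟨_, hn, hle⟩, hmem⟩

end Real

theorem stmt_8_general (S : Finset ℕ) (b : ℕ) (hb : 2 ≤ b) :
    dimH {ξ : ℝ | ξ ∈ Set.Ioo 0 1 ∧ ∃ a : ℕ → ℕ, (∀ j, a j < b) ∧
      ξ = ∑' j : ℕ, (a j : ℝ) / (b : ℝ) ^ (j + 1) ∧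
      ∃ n : ℕ → ℕ, StrictMono n ∧ (∀ i, 0 < n i) ∧
        ∀ i p, p.Prime → p ∣ (∑ j ∈ Finset.range (n i), a j * b ^ (n i - 1 - j)) → p ∈ S} = 0 := by
  refine dimH_eq_zero_of_forall_hausdorffMeasure_eq_zero fun d hd => measure_mono_null ?_
    (hausdorffMeasure_limsup_eq_zero hd _
      (tsum_ediam_bAdicInterval_factoredNumbers_rpow_ne_top S hb hd))
  rintro ξ ⟨-, a, ha, rfl, n, hn, -, hnS⟩
  have hξ : ∑' j : ℕ, (a j : ℝ) / (b : ℝ) ^ (j + 1) = Real.ofDigits fun j => ⟨a j, ha j⟩ :=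
    tsum_congr fun j => div_eq_mul_inv _ _
  rw [hξ]
  exact Real.ofDigits_mem_limsup_bAdicInterval S _
    (hn.tendsto_atTop.frequently (.of_forall fun i => Nat.mem_factoredNumbers'.2 (hnS i)))

theorem stmt_8 (S : Finset ℕ) (hS : ∀ p ∈ S, p.Prime) (b : ℕ) (hb : 2 ≤ b) :
    dimH {ξ : ℝ | ξ ∈ Set.Ioo 0 1 ∧ ∃ a : ℕ → ℕ, (∀ j, a j < b) ∧
      ξ = ∑' j : ℕ, (a j : ℝ) / (b : ℝ) ^ (j + 1) ∧
      ∃ n : ℕ → ℕ, StrictMono n ∧ (∀ i, 0 < n i) ∧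
        ∀ i p, p.Prime → p ∣ (∑ j ∈ Finset.range (n i), a j * b ^ (n i - 1 - j)) → p ∈ S} = 0 :=
  stmt_8_general S b hb
end

section
/- Suppose the base b ≥ 2 has prime factorization b = s_1^{k_1}···s_l^{k_l} with S = {s_1, ..., s_l} and all k_j ≥ 1. Let m = s_1^{r_1}···s_l^{r_l} be an S-unit integer with d = ∑_j r_j ≥ 1, and let t ≥ 1 be its number of base-b digits. Then gcd(b^t, m) ≥ b^{c·d} for a constant c > 0 depending only on b and l (one may take c = (log_b s_1)·min(1/l, min_j k_j · log_b s_1)). -/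
theorem stmt_11 (l : ℕ) (hl : 0 < l) (s : Fin l → ℕ) (hmono : StrictMono s)
    (hprime : ∀ j, (s j).Prime) (kk : Fin l → ℕ) (hkk : ∀ j, 1 ≤ kk j)
    (b : ℕ) (hb : 2 ≤ b) (hbfac : b = ∏ j, s j ^ kk j) :
    ∃ c : ℝ, 0 < c ∧ ∀ (r : Fin l → ℕ) (d m t : ℕ), d = ∑ j, r j → 1 ≤ d →
      m = ∏ j, s j ^ r j → t = (Nat.digits b m).length →
      (b : ℝ) ^ (c * d) ≤ (Nat.gcd (b ^ t) m : ℝ) := by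
  have hb1 : (1:ℝ) < (b:ℝ) := by
    have : (2:ℝ) ≤ (b:ℝ) := by exact_mod_cast hb
    linarith
  have hL : 0 < Real.log b := Real.log_pos hb1
  have hlog2 : 0 < Real.log 2 := Real.log_pos one_lt_two
  set μ : ℝ := min (Real.log 2 / Real.log b) (1 / (l:ℝ)) with hμdef
  have hμpos : 0 < μ := lt_min (div_pos hlog2 hL) (by positivity)
  refine ⟨μ * Real.log 2 / Real.log b, by positivity, ?_⟩
  intro r d m t hd hd1 hm ht
  haveI : Nonempty (Fin l) := ⟨⟨0, hl⟩⟩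
  -- pick index with max exponent
  obtain ⟨j0, -, hj0⟩ := Finset.exists_max_image Finset.univ r Finset.univ_nonempty
  have hdl : d ≤ l * r j0 := by
    rw [hd]
    calc ∑ j, r j ≤ ∑ _j : Fin l, r j0 := Finset.sum_le_sum fun j _ => hj0 j (Finset.mem_univ j)
    _ = l * r j0 := by simp [Finset.sum_const, Finset.card_univ, mul_comm]
  -- m positive and m ≥ 2^d
  have hmpos : 0 < m := by
    rw [hm]; exact Finset.prod_pos fun j _ => pow_pos (hprime j).pos _
  have h2d : 2 ^ d ≤ m := by
    rw [hm, hd, ← Finset.prod_pow_eq_pow_sum]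
    exact Finset.prod_le_prod' fun j _ => Nat.pow_le_pow_left (hprime j).two_le _
  -- m < b^t
  have hmbt : m < b ^ t := by
    rw [ht]
    exact Nat.lt_base_pow_length_digits (by omega)
  -- divisibility facts
  set e : ℕ := min (t * kk j0) (r j0) with hedef
  have hdvd1 : s j0 ^ (t * kk j0) ∣ b ^ t := by
    have h1 : s j0 ^ kk j0 ∣ b := by
      rw [hbfac]; exact Finset.dvd_prod_of_mem _ (Finset.mem_univ j0)
    calc s j0 ^ (t * kk j0) = (s j0 ^ kk j0) ^ t := by rw [← pow_mul, mul_comm]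
    _ ∣ b ^ t := pow_dvd_pow_of_dvd h1 t
  have hdvd2 : s j0 ^ r j0 ∣ m := by
    rw [hm]; exact Finset.dvd_prod_of_mem _ (Finset.mem_univ j0)
  have hgcd : 2 ^ e ≤ Nat.gcd (b ^ t) m := by
    have hdvd : s j0 ^ e ∣ Nat.gcd (b ^ t) m :=
      Nat.dvd_gcd ((pow_dvd_pow _ (min_le_left _ _)).trans hdvd1)
        ((pow_dvd_pow _ (min_le_right _ _)).trans hdvd2)
    calc 2 ^ e ≤ s j0 ^ e := Nat.pow_le_pow_left (hprime j0).two_le _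
    _ ≤ Nat.gcd (b ^ t) m := Nat.le_of_dvd (Nat.gcd_pos_of_pos_right _ hmpos) hdvd
  -- exponent inequality in ℝ: d*μ ≤ e
  have ht1 : t ≤ t * kk j0 := Nat.le_mul_of_pos_right t (hkk j0)
  have hdt : (d:ℝ) * (Real.log 2 / Real.log b) ≤ t := by
    have h2bt : (2:ℝ) ^ d ≤ (b:ℝ) ^ t := by
      exact_mod_cast (h2d.trans hmbt.le)
    have hlog : (d:ℝ) * Real.log 2 ≤ (t:ℝ) * Real.log b := by
      have := Real.log_le_log (by positivity) h2bt
      rwa [Real.log_pow, Real.log_pow] at this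
    rw [← mul_div_assoc, div_le_iff₀ hL]
    linarith
  have hdr : (d:ℝ) * (1 / (l:ℝ)) ≤ r j0 := by
    have : (d:ℝ) ≤ (l:ℝ) * r j0 := by exact_mod_cast hdl
    rw [mul_one_div, div_le_iff₀ (by exact_mod_cast hl : (0:ℝ) < l)]
    linarith
  have hexp : (d:ℝ) * μ ≤ (e:ℕ) := by
    have h1 : (d:ℝ) * μ ≤ (d:ℝ) * (Real.log 2 / Real.log b) :=
      mul_le_mul_of_nonneg_left (min_le_left _ _) (by positivity)
    have h2 : (d:ℝ) * μ ≤ (d:ℝ) * (1 / (l:ℝ)) :=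
      mul_le_mul_of_nonneg_left (min_le_right _ _) (by positivity)
    have he1 : (t:ℝ) ≤ ((t * kk j0 : ℕ):ℝ) := by exact_mod_cast ht1
    rcases min_cases (t * kk j0) (r j0) with ⟨hmin, _⟩ | ⟨hmin, _⟩
    · rw [hedef, hmin]; linarith
    · rw [hedef, hmin]; linarith
  -- put together
  have key : (b:ℝ) ^ (μ * Real.log 2 / Real.log b * d) = (2:ℝ) ^ ((d:ℝ) * μ) := by
    rw [Real.rpow_def_of_pos (by linarith : (0:ℝ) < (b:ℝ)),
        Real.rpow_def_of_pos (by norm_num : (0:ℝ) < 2)]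
    congr 1
    field_simp
  rw [key]
  calc (2:ℝ) ^ ((d:ℝ) * μ) ≤ (2:ℝ) ^ ((e:ℕ):ℝ) :=
        Real.rpow_le_rpow_of_exponent_le one_le_two hexp
    _ = ((2 ^ e : ℕ):ℝ) := by rw [Real.rpow_natCast]; push_cast; ring
    _ ≤ (Nat.gcd (b ^ t) m : ℝ) := by exact_mod_cast hgcd
end

section
/- Let b ≥ 2 be an integer base. Define the Liouville word a = a_1a_2a_3... by a_n = 1 if n = k! for some positive integer k, and a_n = 0 otherwise. For each i ≥ 1, let n_i = (i+3)! − 1 and let u_{n_i} = ∑_{j=1}^{n_i} a_j b^{n_i−j}. Then b^{(i+3)! − (i+2)! − 1} divides u_{n_i}, and consequently, writing c_i for the largest divisor of u_{n_i} all of whose prime factors divide b, one has c_i/u_{n_i} > b^{−n_i/2} for all i ≥ 1. -/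
/-!
The only factorials below `n = (m+1)! - 1` are `1!, …, m!`, so every nonzero digit of the
base-`b` numeral `u` of the first `n` letters sits at a place value `b ^ (n - k!)` with
`n - k! ≥ n - m! = (m+1)! - m! - 1`; this power of `b` divides `u`. Its prime factors all
divide `b`, so the largest such divisor `c` of `u` is at least as large, while `u < b ^ n`;
hence `c / u > b ^ (-m!)`, and `m! ≤ n / 2` because `(m+1)! ≥ 3 · m!`.
-/

open Finset Nat

/-- The integer `u_N = a_1 b^(N-1) + ⋯ + a_N b^0` read off the first `N` letters of `a`. -/
def prefixValue (b : ℕ) (a : ℕ → ℕ) (N : ℕ) : ℕ :=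
  ∑ j ∈ Icc 1 N, a j * b ^ (N - j)

section prefixValue

variable {b : ℕ} {a : ℕ → ℕ} {N : ℕ}

theorem prefixValue_lt_pow (hb : 2 ≤ b) (ha : ∀ j, a j ≤ 1) : prefixValue b a N < b ^ N := by
  have hinj : Set.InjOn (N - ·) (Icc 1 N : Set ℕ) := fun j hj k hk hjk => by
    simp only [coe_Icc, Set.mem_Icc] at hj hk
    simp only at hjk
    omega
  calc prefixValue b a N ≤ ∑ j ∈ Icc 1 N, b ^ (N - j) :=
        sum_le_sum fun j _ => by simpa using Nat.mul_le_mul_right (b ^ (N - j)) (ha j)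
    _ = ∑ k ∈ (Icc 1 N).image (N - ·), b ^ k := (sum_image hinj).symm
    _ < b ^ N := Nat.geomSum_lt hb fun k hk => by
        obtain ⟨j, hj, rfl⟩ := mem_image.mp hk
        have := mem_Icc.mp hj
        omega

theorem pow_pred_le_prefixValue (ha : a 1 = 1) (hN : 1 ≤ N) : b ^ (N - 1) ≤ prefixValue b a N := by
  simpa [prefixValue, ha] using
    single_le_sum (f := fun j => a j * b ^ (N - j)) (fun _ _ => Nat.zero_le _)
      (mem_Icc.mpr ⟨le_rfl, hN⟩)

theorem pow_dvd_prefixValue {M : ℕ} (h : ∀ j ∈ Icc 1 N, a j ≠ 0 → j + M ≤ N) :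
    b ^ M ∣ prefixValue b a N := by
  refine dvd_sum fun j hj => ?_
  by_cases hj0 : a j = 0
  · simp [hj0]
  · exact (pow_dvd_pow b (by have := h j hj hj0; omega)).mul_left _

end prefixValue

theorem factorial_le_of_factorial_le_factorial_succ_sub_one {k m : ℕ} (hk : 0 < k)
    (h : k ! ≤ (m + 1)! - 1) : k ! ≤ m ! := by
  have : k ! < (m + 1)! := by have := Nat.factorial_pos (m + 1); omega
  exact Nat.factorial_le (Nat.lt_succ_iff.mp ((Nat.factorial_lt hk).mp this))

theorem pow_dvd_prefixValue_of_support_factorial {b m : ℕ} {a : ℕ → ℕ} (hm : 1 ≤ m)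
    (ha : ∀ j, a j ≠ 0 → ∃ k, 0 < k ∧ j = k !) :
    b ^ ((m + 1)! - (m)! - 1) ∣ prefixValue b a ((m + 1)! - 1) := by
  refine pow_dvd_prefixValue fun j hj hj0 => ?_
  obtain ⟨k, hk, rfl⟩ := ha j hj0
  have := factorial_le_of_factorial_le_factorial_succ_sub_one hk (mem_Icc.mp hj).2
  have : (m)! < (m + 1)! := (Nat.factorial_lt (by omega)).mpr (by omega)
  omega

theorem factorial_succ_sub_one_le_two_mul {m : ℕ} (hm : 2 ≤ m) :
    (m + 1)! - 1 ≤ 2 * ((m + 1)! - (m)! - 1) := by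
  have h3 : 3 * m ! ≤ (m + 1)! := by
    rw [Nat.factorial_succ]
    exact Nat.mul_le_mul_right _ (by omega)
  have := Nat.factorial_pos m
  omega

theorem rpow_neg_half_lt_div {B c u : ℝ} {E N : ℕ} (hB : 1 < B) (hu : 0 < u) (huN : u < B ^ N)
    (hc : B ^ E ≤ c) (hNE : N ≤ 2 * E) : B ^ (-(N : ℝ) / 2) < c / u := by
  have hB0 : 0 < B := by linarith
  calc B ^ (-(N : ℝ) / 2) ≤ B ^ ((E : ℝ) - N) := by
        apply (Real.rpow_le_rpow_left_iff hB).mpr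
        have : (N : ℝ) ≤ 2 * E := by exact_mod_cast hNE
        linarith
    _ = B ^ E / B ^ N := by rw [Real.rpow_sub hB0, Real.rpow_natCast, Real.rpow_natCast]
    _ < B ^ E / u := div_lt_div_of_pos_left (by positivity) hu huN
    _ ≤ c / u := by gcongr

open Classical in
theorem stmt_12 (b : ℕ) (hb : 2 ≤ b)
    (a : ℕ → ℕ) (ha : ∀ n, a n = if ∃ k, 0 < k ∧ n = Nat.factorial k then 1 else 0)
    (n : ℕ → ℕ) (hn : ∀ i, n i = Nat.factorial (i + 3) - 1)
    (u : ℕ → ℕ) (hu : ∀ i, u i = ∑ j ∈ Finset.Icc 1 (n i), a j * b ^ (n i - j)) :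
    ∀ i, 1 ≤ i →
      b ^ (Nat.factorial (i + 3) - Nat.factorial (i + 2) - 1) ∣ u i ∧
      ∀ c : ℕ, c ∣ u i → (∀ p, p.Prime → p ∣ c → p ∣ b) →
        (∀ c', c' ∣ u i → (∀ p, p.Prime → p ∣ c' → p ∣ b) → c' ≤ c) →
        (b : ℝ) ^ (-(n i : ℝ) / 2) < (c : ℝ) / (u i : ℝ) := by
  intro i _
  have hni : n i = (i + 2 + 1)! - 1 := hn i
  have hui : u i = prefixValue b a (n i) := hu i
  have hdvd : b ^ ((i + 3)! - (i + 2)! - 1) ∣ u i := by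
    rw [hui, hni]
    exact pow_dvd_prefixValue_of_support_factorial (by omega) fun j hj => by
      by_contra h
      simp [ha, h] at hj
  refine ⟨hdvd, fun c _ _ hcmax => ?_⟩
  have hdigit : ∀ j, a j ≤ 1 := fun j => by rw [ha]; split_ifs <;> simp
  have hfirst : a 1 = 1 := by rw [ha, if_pos ⟨1, one_pos, rfl⟩]
  have hupos : 0 < u i := hui ▸ lt_of_lt_of_le (by positivity)
    (pow_pred_le_prefixValue hfirst (by have := Nat.self_le_factorial (i + 2 + 1); omega))
  apply rpow_neg_half_lt_div (E := (i + 3)! - (i + 2)! - 1) (by exact_mod_cast hb)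
    (by exact_mod_cast hupos)
    (by exact_mod_cast hui ▸ prefixValue_lt_pow hb hdigit)
    (by exact_mod_cast hcmax _ hdvd fun p hp hpb => hp.dvd_of_dvd_pow hpb)
  rw [hni]
  exact factorial_succ_sub_one_le_two_mul (by omega)
end

section
/- Let S = {s_1 < ... < s_l} be primes, b ≥ 2, ε > 0, and let (m_i) be S-unit integers m_i = ∏_j s_j^{r_{i,j}} whose total exponents d_i = ∑_j r_{i,j} satisfy d_{i+1} ≥ (1+ε)d_i for all i. Let t_i be the base-b digit length of m_i and n_i = ∑_{j≤i} t_j, and let u_{n_i} be the numerator of the concatenation of the base-b expansions of m_1, ..., m_i (so u_{n_i} = b^{t_i} u_{n_{i−1}} + m_i). Then there exists a constant C, depending only on S, b, ε, such that u_{n_i} ≤ b^{C·d_i} for all i. -/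
theorem stmt_19 (l : ℕ) (hl : 0 < l) (s : Fin l → ℕ) (hmono : StrictMono s)
    (hprime : ∀ j, (s j).Prime) (b : ℕ) (hb : 2 ≤ b) (ε : ℝ) (hε : 0 < ε) :
    ∃ C : ℝ, ∀ (r : ℕ → Fin l → ℕ) (m d t u : ℕ → ℕ),
      (∀ i, m i = ∏ j, s j ^ r i j) →
      (∀ i, d i = ∑ j, r i j) →
      (∀ i, 1 ≤ i → 1 ≤ d i) →
      (∀ i, 1 ≤ i → (1 + ε) * (d i : ℝ) ≤ (d (i + 1) : ℝ)) →
      (∀ i, t i = (Nat.digits b (m i)).length) →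
      u 1 = m 1 →
      (∀ i, 1 ≤ i → u (i + 1) = b ^ (t (i + 1)) * u i + m (i + 1)) →
      ∀ i, 1 ≤ i → (u i : ℝ) ≤ (b : ℝ) ^ (C * (d i : ℝ)) := by
  have hb1 : (1:ℝ) < (b:ℝ) := by exact_mod_cast Nat.lt_of_lt_of_le one_lt_two hb
  have hb0 : (0:ℝ) < (b:ℝ) := by linarith
  have hb2 : (2:ℝ) ≤ (b:ℝ) := by exact_mod_cast hb
  set p : ℕ := s ⟨l - 1, by omega⟩ with hpdef
  have hp2 : 2 ≤ p := (hprime _).two_le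
  set C1 : ℝ := Real.logb b p with hC1def
  have hC1 : 0 ≤ C1 := Real.logb_nonneg hb1 (by exact_mod_cast Nat.one_le_of_lt hp2)
  have hpC1 : (p:ℝ) = (b:ℝ) ^ C1 := (Real.rpow_logb hb0 (by linarith) (by positivity)).symm
  refine ⟨(C1 + 2) * (1 + ε) / ε, ?_⟩
  set C : ℝ := (C1 + 2) * (1 + ε) / ε with hCdef
  have hCe : C * ε = (C1 + 2) * (1 + ε) := by
    rw [hCdef, div_mul_cancel₀ _ hε.ne']
  have hCpos : 0 < C := by rw [hCdef]; positivity
  have hC0 : C1 + 2 ≤ C := by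
    rw [hCdef, le_div_iff₀ hε]
    nlinarith
  intro r m d t u hm hd hd1 hdg ht hu1 hurec
  -- bound m
  have hmb : ∀ i, (m i : ℝ) ≤ (b:ℝ) ^ (C1 * (d i : ℝ)) := by
    intro i
    have h1 : m i ≤ p ^ d i := by
      rw [hm i, hd i, ← Finset.prod_pow_eq_pow_sum]
      apply Finset.prod_le_prod
      · intro j _; positivity
      · intro j _
        exact Nat.pow_le_pow_left (hmono.monotone (by
          simp [Fin.le_def]; omega)) _
    calc (m i : ℝ) ≤ (p:ℝ) ^ (d i : ℕ) := by exact_mod_cast h1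
      _ = (b:ℝ) ^ (C1 * (d i : ℝ)) := by
          rw [hpC1, ← Real.rpow_natCast ((b:ℝ) ^ C1) (d i), ← Real.rpow_mul (le_of_lt hb0)]
  -- bound t
  have htb : ∀ i, (t i : ℝ) ≤ C1 * (d i : ℝ) + 1 := by
    intro i
    rcases Nat.eq_zero_or_pos (m i) with h0 | h0
    · rw [ht i, h0]
      simp
      positivity
    · rw [ht i, Nat.digits_len b (m i) (by omega) (by omega)]
      push_cast
      have hlog : ((b:ℝ)) ^ ((Nat.log b (m i) : ℕ) : ℝ) ≤ (b:ℝ) ^ (C1 * (d i : ℝ)) := by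
        rw [Real.rpow_natCast]
        calc ((b:ℝ)) ^ (Nat.log b (m i)) ≤ (m i : ℝ) := by
              exact_mod_cast Nat.pow_log_le_self b (by omega)
          _ ≤ _ := hmb i
      have := (Real.rpow_le_rpow_left_iff hb1).mp hlog
      linarith
  -- main induction
  intro i hi
  induction i, hi using Nat.le_induction with
  | base =>
      rw [hu1]
      calc (m 1 : ℝ) ≤ (b:ℝ) ^ (C1 * (d 1 : ℝ)) := hmb 1
        _ ≤ (b:ℝ) ^ (C * (d 1 : ℝ)) := by
            apply Real.rpow_le_rpow_left_iff hb1 |>.mpr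
            have : (1:ℝ) ≤ (d 1 : ℝ) := by exact_mod_cast hd1 1 le_rfl
            nlinarith
  | succ i hi ih =>
      have hrec := hurec i hi
      have hd' : (1:ℝ) ≤ (d (i+1) : ℝ) := by exact_mod_cast hd1 (i+1) (by omega)
      have hdg' := hdg i hi
      have hdi0 : (0:ℝ) ≤ (d i : ℝ) := by positivity
      have hu0 : (0:ℝ) ≤ (u i : ℝ) := by positivity
      set A : ℝ := C1 * (d (i+1) : ℝ) + 1 + C * (d i : ℝ) with hA
      have hstep : (u (i+1) : ℝ) ≤ (b:ℝ) ^ A + (b:ℝ) ^ A := by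
        rw [hrec]
        push_cast
        have e1 : ((b:ℝ)) ^ (t (i+1)) * (u i : ℝ)
            ≤ (b:ℝ) ^ (C1 * (d (i+1) : ℝ) + 1) * (b:ℝ) ^ (C * (d i : ℝ)) := by
          apply mul_le_mul _ ih hu0 (by positivity)
          calc ((b:ℝ)) ^ (t (i+1)) = (b:ℝ) ^ ((t (i+1) : ℕ) : ℝ) :=
                (Real.rpow_natCast _ _).symm
            _ ≤ _ := Real.rpow_le_rpow_left_iff hb1 |>.mpr (htb (i+1))
        rw [← Real.rpow_add hb0] at e1
        have e2 : (m (i+1) : ℝ) ≤ (b:ℝ) ^ A := by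
          refine (hmb (i+1)).trans ?_
          apply Real.rpow_le_rpow_left_iff hb1 |>.mpr
          nlinarith [mul_nonneg hCpos.le hdi0]
        exact add_le_add e1 e2
      have hexp : A + 1 ≤ C * (d (i+1) : ℝ) := by
        nlinarith [mul_le_mul_of_nonneg_left hdg' (show (0:ℝ) ≤ C1 + 2 by linarith),
          mul_nonneg hε.le (sub_nonneg.mpr hd'), hC1, hε.le, hd', hdi0, hCe,
          mul_nonneg hC1 (mul_nonneg hε.le (sub_nonneg.mpr hd'))]
      calc (u (i+1) : ℝ) ≤ (b:ℝ) ^ A + (b:ℝ) ^ A := hstep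
        _ ≤ (b:ℝ) ^ A * (b:ℝ) := by
            nlinarith [Real.rpow_pos_of_pos hb0 A]
        _ = (b:ℝ) ^ (A + 1) := (Real.rpow_add_one hb0.ne' A).symm
        _ ≤ (b:ℝ) ^ (C * (d (i+1) : ℝ)) := Real.rpow_le_rpow_left_iff hb1 |>.mpr hexp
end
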